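/- Let W workers send messages y_1,...,y_W ∈ R^D with regular set R of size R > W/2, and let TriMean be coordinate-wise trimmed mean that in each dimension discards the W−R smallest and W−R largest entries and averages the remaining 2R−W entries. If δ = 1 − R/W < 1/2, then ‖TriMean(y_1,...,y_W) − ȳ‖ ≤ (3δ/(1−2δ)) · min{√D, √R} · max_{w∈R} ‖y_w − ȳ‖, where ȳ = (1/R)Σ_{w∈R} y_w. -/

import Mathlib

/-!
In each coordinate only `W - R` values are poisoned, so every value the trimmed mean keeps lies
between two regular values and deviates from the regular mean by at most the regular spread
`M_d`. The regular deviations sum to zero, so the kept deviations sum to the deviations of kept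
poisoned workers minus those of discarded regular workers: at most `3 (W - R)` terms, each
bounded by `M_d`. Finally `∑_d M_d²` is at most `D M²`, and also, choosing a maximising worker
in each coordinate, at most `∑_{w ∈ Reg} ‖y w - ȳ‖² ≤ R M²`.
-/

/-- Coordinate-wise trimmed mean: in each dimension `d`, sort the `W` values, discard the
`W − R` smallest and the `W − R` largest, and average the remaining `2R − W` values. -/
noncomputable def triMean (W R D : ℕ) (y : Fin W → EuclideanSpace ℝ (Fin D)) :
    EuclideanSpace ℝ (Fin D) :=
  WithLp.toLp 2 <| fun d => ((2 * R - W : ℕ) : ℝ)⁻¹ *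
    ∑ i ∈ Finset.univ.filter (fun i : Fin W => W - R ≤ (i : ℕ) ∧ (i : ℕ) < R),
      y (Tuple.sort (fun w => y w d) i) d

open Finset

section SortedOrder

variable {α : Type*} [LinearOrder α] {n : ℕ} (f : Fin n → α) (s : Finset (Fin n)) {i : Fin n}

lemma exists_mem_le_sort_apply (hi : #sᶜ ≤ i) : ∃ w ∈ s, f w ≤ f (Tuple.sort f i) := by
  by_contra! h
  have hsub : (Iic i).map (Tuple.sort f).toEmbedding ⊆ sᶜ := by
    rintro _ hw
    obtain ⟨j, hj, rfl⟩ := mem_map.mp hw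
    exact mem_compl.mpr fun hmem => (h _ hmem).not_ge (Tuple.monotone_sort f (mem_Iic.mp hj))
  have := card_le_card hsub
  rw [card_map, Fin.card_Iic] at this
  omega

lemma exists_mem_sort_apply_le (hi : i + #sᶜ < n) : ∃ w ∈ s, f (Tuple.sort f i) ≤ f w := by
  by_contra! h
  have hsub : (Ici i).map (Tuple.sort f).toEmbedding ⊆ sᶜ := by
    rintro _ hw
    obtain ⟨j, hj, rfl⟩ := mem_map.mp hw
    exact mem_compl.mpr fun hmem => (h _ hmem).not_ge (Tuple.monotone_sort f (mem_Ici.mp hj))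
  have := card_le_card hsub
  rw [card_map, Fin.card_Ici] at this
  omega

end SortedOrder

lemma abs_sum_le_of_sum_eq_zero {ι : Type*} [DecidableEq ι] {s t : Finset ι} {g : ι → ℝ}
    {M : ℝ} (ht : ∑ x ∈ t, g x = 0) (hs : ∀ x ∈ s, |g x| ≤ M) (htM : ∀ x ∈ t, |g x| ≤ M) :
    |∑ x ∈ s, g x| ≤ (#(s \ t) + #(t \ s)) * M := by
  have bound : ∀ u ⊆ s ∪ t, |∑ x ∈ u, g x| ≤ #u * M := fun u hu =>
    (abs_sum_le_sum_abs _ _).trans <| by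
      simpa using sum_le_card_nsmul u _ M fun x hx => (mem_union.mp (hu hx)).elim (hs x) (htM x)
  rw [← sub_zero (∑ x ∈ s, g x), ← ht, ← sum_sdiff_sub_sum_sdiff, add_mul]
  exact (abs_sub _ _).trans (add_le_add (bound _ (sdiff_subset.trans subset_union_left))
    (bound _ (sdiff_subset.trans subset_union_right)))

section TrimmedMean

variable {W R : ℕ}

def keptRanks (W R : ℕ) : Finset (Fin W) :=
  univ.filter fun i : Fin W => W - R ≤ (i : ℕ) ∧ (i : ℕ) < R

noncomputable def trimmedMean (R : ℕ) (f : Fin W → ℝ) : ℝ :=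
  ((2 * R - W : ℕ) : ℝ)⁻¹ * ∑ i ∈ keptRanks W R, f (Tuple.sort f i)

lemma triMean_apply {D : ℕ} (y : Fin W → EuclideanSpace ℝ (Fin D)) (d : Fin D) :
    triMean W R D y d = trimmedMean R fun w => y w d :=
  rfl

noncomputable def keptWorkers (R : ℕ) (f : Fin W → ℝ) : Finset (Fin W) :=
  (keptRanks W R).map (Tuple.sort f).toEmbedding

lemma card_keptRanks (hRW : R ≤ W) : #(keptRanks W R) = 2 * R - W := by
  have : (keptRanks W R).map Fin.valEmbedding = Ico (W - R) R := by
    ext n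
    simp only [keptRanks, mem_map, mem_filter, mem_univ, true_and, Fin.valEmbedding_apply,
      mem_Ico]
    exact ⟨by rintro ⟨i, hi, rfl⟩; exact hi, fun hn => ⟨⟨n, by omega⟩, hn, rfl⟩⟩
  rw [← card_map Fin.valEmbedding, this, Nat.card_Ico]
  omega

lemma card_keptWorkers (hRW : R ≤ W) (f : Fin W → ℝ) : #(keptWorkers R f) = 2 * R - W := by
  rw [keptWorkers, card_map, card_keptRanks hRW]

lemma trimmedMean_eq (f : Fin W → ℝ) :
    trimmedMean R f = ((2 * R - W : ℕ) : ℝ)⁻¹ * ∑ w ∈ keptWorkers R f, f w := by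
  rw [trimmedMean, keptWorkers, sum_map]
  rfl

lemma abs_sub_le_of_mem_keptWorkers {Reg : Finset (Fin W)} (hcard : #Reg = R) {f : Fin W → ℝ}
    {μ M : ℝ} (hM : ∀ w ∈ Reg, |f w - μ| ≤ M) {w : Fin W} (hw : w ∈ keptWorkers R f) :
    |f w - μ| ≤ M := by
  obtain ⟨i, hi, rfl⟩ := mem_map.mp hw
  rw [Equiv.toEmbedding_apply]
  have hi : W - R ≤ (i : ℕ) ∧ (i : ℕ) < R := (mem_filter.mp hi).2
  have hcompl : #Regᶜ = W - R := by rw [card_compl, hcard, Fintype.card_fin]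
  obtain ⟨a, ha, hfa⟩ := exists_mem_le_sort_apply f Reg (i := i) (by omega)
  obtain ⟨b, hb, hfb⟩ := exists_mem_sort_apply_le f Reg (i := i) (by omega)
  have := abs_le.mp (hM a ha)
  have := abs_le.mp (hM b hb)
  exact abs_le.mpr ⟨by linarith, by linarith⟩

theorem abs_trimmedMean_sub_le (h2 : W < 2 * R) {Reg : Finset (Fin W)}
    (hcard : #Reg = R) (f : Fin W → ℝ) {M : ℝ}
    (hM : ∀ w ∈ Reg, |f w - (R : ℝ)⁻¹ * ∑ v ∈ Reg, f v| ≤ M) :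
    |trimmedMean R f - (R : ℝ)⁻¹ * ∑ v ∈ Reg, f v| ≤ 3 * ((W : ℝ) - R) / (2 * R - W) * M := by
  set μ := (R : ℝ)⁻¹ * ∑ v ∈ Reg, f v
  have hRW : R ≤ W := by simpa [hcard] using card_le_univ Reg
  have hR : (R : ℝ) ≠ 0 := Nat.cast_ne_zero.mpr (by omega)
  have hk : ((2 * R - W : ℕ) : ℝ) = 2 * R - W := by
    rw [Nat.cast_sub h2.le]; push_cast; ring
  have hkpos : (0 : ℝ) < 2 * R - W := by rw [← hk]; exact_mod_cast Nat.sub_pos_of_lt h2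
  obtain ⟨w₀, hw₀⟩ : Reg.Nonempty := card_pos.mp (by omega)
  have hM0 : 0 ≤ M := (abs_nonneg _).trans (hM w₀ hw₀)
  have hReg0 : ∑ w ∈ Reg, (f w - μ) = 0 := by
    rw [sum_sub_distrib, sum_const, hcard, nsmul_eq_mul, mul_inv_cancel_left₀ hR, sub_self]
  have hdev : trimmedMean R f - μ = (2 * R - W : ℝ)⁻¹ * ∑ w ∈ keptWorkers R f, (f w - μ) := by
    rw [trimmedMean_eq, sum_sub_distrib, sum_const, card_keptWorkers hRW, nsmul_eq_mul, hk]
    field_simp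
  set S := keptWorkers R f
  -- `S \ Reg ⊆ Regᶜ`, and `#Reg - #S = W - R`
  have hcards : (#(S \ Reg) + #(Reg \ S) : ℝ) ≤ 3 * ((W : ℝ) - R) := by
    have hS : #S = 2 * R - W := card_keptWorkers hRW f
    have hcompl : #Regᶜ = W - R := by rw [card_compl, hcard, Fintype.card_fin]
    have h₁ : #(S \ Reg) ≤ W - R :=
      hcompl ▸ card_le_card fun w hw => mem_compl.mpr (mem_sdiff.mp hw).2
    have h₂ := card_sdiff_add_card_inter Reg S
    have h₃ := card_sdiff_add_card_inter S Reg
    rw [inter_comm] at h₃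
    rw [← Nat.cast_sub hRW]
    exact_mod_cast (by omega : #(S \ Reg) + #(Reg \ S) ≤ 3 * (W - R))
  have hsum := abs_sum_le_of_sum_eq_zero hReg0
    (fun w hw => abs_sub_le_of_mem_keptWorkers hcard hM hw) hM
  calc |trimmedMean R f - μ| = (2 * R - W : ℝ)⁻¹ * |∑ w ∈ S, (f w - μ)| := by
        rw [hdev, abs_mul, abs_inv, abs_of_pos hkpos]
    _ ≤ (2 * R - W : ℝ)⁻¹ * (3 * ((W : ℝ) - R) * M) := by
        gcongr
        exact hsum.trans (by gcongr)
    _ = 3 * ((W : ℝ) - R) / (2 * R - W) * M := by ring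

end TrimmedMean

section CoordinatewiseBound

variable {ι α : Type*} [Fintype ι] (s : Finset α) (hs : s.Nonempty) (z : α → EuclideanSpace ℝ ι)

lemma sum_sq_sup'_abs_apply_le_fintype_card_mul :
    ∑ i, (s.sup' hs fun w => |z w i|) ^ 2 ≤ Fintype.card ι * (s.sup' hs fun w => ‖z w‖) ^ 2 := by
  rw [← nsmul_eq_mul, ← card_univ]
  refine sum_le_card_nsmul _ _ _ fun i _ => ?_
  obtain ⟨w, hw, hmax⟩ := exists_mem_eq_sup' hs fun w => |z w i|
  rw [hmax]
  exact pow_le_pow_left₀ (abs_nonneg _)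
    ((PiLp.norm_apply_le (z w) i).trans (le_sup' (fun w => ‖z w‖) hw)) 2

lemma sum_sq_sup'_abs_apply_le_card_finset_mul :
    ∑ i, (s.sup' hs fun w => |z w i|) ^ 2 ≤ #s * (s.sup' hs fun w => ‖z w‖) ^ 2 :=
  calc ∑ i, (s.sup' hs fun w => |z w i|) ^ 2 ≤ ∑ i, ∑ w ∈ s, z w i ^ 2 := by
        refine sum_le_sum fun i _ => ?_
        obtain ⟨w, hw, hmax⟩ := exists_mem_eq_sup' hs fun w => |z w i|
        rw [hmax, sq_abs]
        exact single_le_sum (f := fun w => z w i ^ 2) (fun _ _ => sq_nonneg _) hw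
    _ = ∑ w ∈ s, ‖z w‖ ^ 2 := by
        rw [sum_comm]
        simp only [EuclideanSpace.real_norm_sq_eq]
    _ ≤ #s * (s.sup' hs fun w => ‖z w‖) ^ 2 := by
        rw [← nsmul_eq_mul]
        exact sum_le_card_nsmul _ _ _ fun w hw =>
          pow_le_pow_left₀ (norm_nonneg _) (le_sup' (fun w => ‖z w‖) hw) 2

theorem norm_le_mul_min_sqrt_mul_sup' {v : EuclideanSpace ℝ ι} {C : ℝ} (hC : 0 ≤ C)
    (hv : ∀ i, |v i| ≤ C * s.sup' hs fun w => |z w i|) :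
    ‖v‖ ≤ C * min √(Fintype.card ι) √(#s) * s.sup' hs fun w => ‖z w‖ := by
  have hM : 0 ≤ s.sup' hs fun w => ‖z w‖ :=
    (norm_nonneg _).trans (le_sup' (fun w => ‖z w‖) hs.choose_spec)
  rw [← Real.sqrt_monotone.map_min, ← sq_le_sq₀ (norm_nonneg _) (by positivity),
    EuclideanSpace.real_norm_sq_eq, mul_pow, mul_pow, Real.sq_sqrt (by positivity)]
  calc ∑ i, v i ^ 2 ≤ ∑ i, C ^ 2 * (s.sup' hs fun w => |z w i|) ^ 2 := by
        refine sum_le_sum fun i _ => ?_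
        rw [← mul_pow, ← sq_abs]
        exact pow_le_pow_left₀ (abs_nonneg _) (hv i) 2
    _ ≤ C ^ 2 * min (Fintype.card ι : ℝ) #s * (s.sup' hs fun w => ‖z w‖) ^ 2 := by
        rw [← mul_sum, mul_assoc, min_mul_of_nonneg _ _ (sq_nonneg _)]
        gcongr
        exact le_min (sum_sq_sup'_abs_apply_le_fintype_card_mul s _ z)
          (sum_sq_sup'_abs_apply_le_card_finset_mul s _ z)

end CoordinatewiseBound

lemma mul_one_sub_div_div_one_sub_two_mul_eq (c a b : ℝ) (hb : b ≠ 0) :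
    c * (1 - a / b) / (1 - 2 * (1 - a / b)) = c * (b - a) / (2 * a - b) := by
  rw [show 1 - a / b = (b - a) / b by field_simp,
    show 1 - 2 * ((b - a) / b) = (2 * a - b) / b by field_simp; ring,
    mul_div_assoc, div_div_div_cancel_right₀ hb, mul_div_assoc]

theorem stmt_8_general (W R D : ℕ) (h2 : W < 2 * R)
    (Reg : Finset (Fin W)) (hReg : Reg.Nonempty) (hcard : Reg.card = R)
    (y : Fin W → EuclideanSpace ℝ (Fin D)) :
    ‖triMean W R D y - (R : ℝ)⁻¹ • ∑ w ∈ Reg, y w‖ ≤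
      3 * (1 - (R : ℝ) / W) / (1 - 2 * (1 - (R : ℝ) / W)) *
        min (Real.sqrt D) (Real.sqrt R) *
        Reg.sup' hReg (fun w => ‖y w - (R : ℝ)⁻¹ • ∑ v ∈ Reg, y v‖) := by
  set μ := (R : ℝ)⁻¹ • ∑ w ∈ Reg, y w
  have hμ : ∀ d, μ d = (R : ℝ)⁻¹ * ∑ w ∈ Reg, y w d := fun d => by
    simp [μ, WithLp.ofLp_sum]
  have hcoord : ∀ d, |(triMean W R D y - μ) d| ≤
      3 * ((W : ℝ) - R) / (2 * R - W) * Reg.sup' hReg fun w => |(y w - μ) d| := fun d => by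
    rw [PiLp.sub_apply, triMean_apply, hμ]
    refine abs_trimmedMean_sub_le h2 hcard (fun w => y w d) fun w hw => ?_
    rw [← hμ, ← PiLp.sub_apply]
    exact le_sup' (fun w => |(y w - μ) d|) hw
  have hRW : R ≤ W := by simpa [hcard] using card_le_univ Reg
  have hC : (0 : ℝ) ≤ 3 * ((W : ℝ) - R) / (2 * R - W) := by
    have : (R : ℝ) ≤ W := by exact_mod_cast hRW
    have : (W : ℝ) < 2 * R := by exact_mod_cast h2
    exact div_nonneg (by linarith) (by linarith)
  rw [mul_one_sub_div_div_one_sub_two_mul_eq 3 R W (Nat.cast_ne_zero.mpr (by omega))]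
  simpa [hcard] using norm_le_mul_min_sqrt_mul_sup' Reg hReg (fun w => y w - μ) hC hcoord

/-- if `δ = 1 − R/W < 1/2`, then
`‖TriMean(y) − ȳ‖ ≤ (3δ/(1−2δ)) · min{√D, √R} · max_{w ∈ Reg} ‖y w − ȳ‖`,
where `ȳ` is the average over the `R` regular workers. -/
theorem stmt_8 (W R D : ℕ) (hRW : R ≤ W) (h2 : W < 2 * R)
    (Reg : Finset (Fin W)) (hReg : Reg.Nonempty) (hcard : Reg.card = R)
    (y : Fin W → EuclideanSpace ℝ (Fin D)) :
    ‖triMean W R D y - (R : ℝ)⁻¹ • ∑ w ∈ Reg, y w‖ ≤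
      3 * (1 - (R : ℝ) / W) / (1 - 2 * (1 - (R : ℝ) / W)) *
        min (Real.sqrt D) (Real.sqrt R) *
        Reg.sup' hReg (fun w => ‖y w - (R : ℝ)⁻¹ • ∑ v ∈ Reg, y v‖) :=
  stmt_8_general W R D h2 Reg hReg hcard y
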